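/- If the Rashomon Capacity of a finite multiplicity set {P_1,...,P_m} with a capacity-achieving input distribution equals log c (its maximum), then the set contains all c vertices e_1,...,e_c of the probability simplex among the distributions receiving positive weight, and in particular every P_j with positive capacity-achieving weight is a point mass. -/

import Mathlib

open BigOperators

/-- probability simplex on `Fin c` -/
def simplex (c : ℕ) : Set (Fin c → ℝ) :=
  {p | (∀ k, 0 ≤ p k) ∧ ∑ k, p k = 1}

/-- KL divergence (base-2), extended-real valued with the usual conventions. -/
noncomputable def klDiv {c : ℕ} (p q : Fin c → ℝ) : EReal :=
  ∑ k, if p k = 0 then (0 : EReal)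
       else if q k = 0 then ⊤
       else ((p k * Real.logb 2 (p k / q k) : ℝ) : EReal)

/-- Rashomon Capacity of the scores `P 1, …, P m`. -/
noncomputable def capacity {m c : ℕ} (P : Fin m → Fin c → ℝ) : EReal :=
  ⨆ α : simplex m, ⨅ q : simplex c, ∑ j, ((α.1 j : ℝ) : EReal) * klDiv (P j) q.1

/-!
With `q = ∑ⱼ αⱼ Pⱼ` the output law, evaluating the infimum in the capacity-achieving hypothesis
at `q` gives `log c ≤ H(q) - ∑ⱼ αⱼ H(Pⱼ)` (mutual information as `H(Y) - H(Y|M)`). Since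
`H(q) ≤ log c` and `H(Pⱼ) ≥ 0`, both bounds are tight: each `Pⱼ` with `αⱼ > 0` has zero entropy,
hence is a point mass, and `q` is uniform by the equality case of Jensen's inequality for the
strictly concave `-x log x`, so every vertex `e_k` is one of these point masses.
-/

open Real Finset

@[norm_cast]
lemma EReal.coe_finset_sum {ι : Type*} (s : Finset ι) (f : ι → ℝ) :
    ((∑ i ∈ s, f i : ℝ) : EReal) = ∑ i ∈ s, (f i : EReal) :=
  map_sum (⟨⟨(↑), EReal.coe_zero⟩, EReal.coe_add⟩ : ℝ →+ EReal) f s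

lemma Real.negMulLog_eq_zero_iff {x : ℝ} (hx : 0 ≤ x) : negMulLog x = 0 ↔ x = 0 ∨ x = 1 := by
  constructor
  · intro h
    rcases mul_eq_zero.mp h with h | h
    · exact .inl (neg_eq_zero.mp h)
    · rcases Real.log_eq_zero.mp h with h | h | h
      · exact .inl h
      · exact .inr h
      · linarith
  · rintro (rfl | rfl) <;> simp

section Simplex

variable {c : ℕ} {p : Fin c → ℝ}

lemma pos_of_mem_simplex (hp : p ∈ simplex c) : 0 < c := by
  rcases Nat.eq_zero_or_pos c with rfl | hc
  · simpa using hp.2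
  · exact hc

lemma le_one_of_mem_simplex (hp : p ∈ simplex c) (k : Fin c) : p k ≤ 1 :=
  hp.2 ▸ single_le_sum (fun i _ => hp.1 i) (mem_univ k)

lemma eq_ite_of_mem_simplex_of_eq_one (hp : p ∈ simplex c) {k : Fin c} (hk : p k = 1) :
    p = fun i => if i = k then 1 else 0 := by
  have hrest : ∑ i ∈ univ.erase k, p i = 0 := by
    linarith [add_sum_erase univ p (mem_univ k), hp.2]
  funext i
  split_ifs with hik
  · rw [hik, hk]
  · exact (sum_eq_zero_iff_of_nonneg fun i _ => hp.1 i).mp hrest i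
      (mem_erase.mpr ⟨hik, mem_univ i⟩)

end Simplex

/-- Shannon entropy in nats. -/
noncomputable def entropy {c : ℕ} (p : Fin c → ℝ) : ℝ := ∑ k, negMulLog (p k)

section Entropy

variable {c : ℕ} {p : Fin c → ℝ}

lemma entropy_nonneg (hp : p ∈ simplex c) : 0 ≤ entropy p :=
  sum_nonneg fun k _ => negMulLog_nonneg (hp.1 k) (le_one_of_mem_simplex hp k)

lemma exists_eq_ite_of_entropy_eq_zero (hp : p ∈ simplex c) (h : entropy p = 0) :
    ∃ k, p = fun i => if i = k then 1 else 0 := by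
  have hterm : ∀ k, p k = 0 ∨ p k = 1 := fun k =>
    (negMulLog_eq_zero_iff (hp.1 k)).mp <| (sum_eq_zero_iff_of_nonneg fun k _ =>
      negMulLog_nonneg (hp.1 k) (le_one_of_mem_simplex hp k)).mp h k (mem_univ k)
  obtain ⟨k, -, hk⟩ := exists_ne_zero_of_sum_ne_zero (hp.2.symm ▸ one_ne_zero : ∑ k, p k ≠ 0)
  exact ⟨k, eq_ite_of_mem_simplex_of_eq_one hp ((hterm k).resolve_left hk)⟩

lemma negMulLog_uniform_average (hp : p ∈ simplex c) :
    negMulLog (∑ k, (c : ℝ)⁻¹ • p k) = (c : ℝ)⁻¹ * log c := by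
  simp only [smul_eq_mul, ← mul_sum, hp.2, mul_one, negMulLog, log_inv]
  ring

lemma uniform_average_negMulLog :
    ∑ k, (c : ℝ)⁻¹ • negMulLog (p k) = (c : ℝ)⁻¹ * entropy p := by
  simp only [smul_eq_mul, ← mul_sum, entropy]

lemma entropy_le_log_card (hp : p ∈ simplex c) : entropy p ≤ log c := by
  have hc : (0 : ℝ) < c := Nat.cast_pos.mpr (pos_of_mem_simplex hp)
  have hw : ∑ _k : Fin c, (c : ℝ)⁻¹ = 1 := by simp [hc.ne']
  have jensen := concaveOn_negMulLog.le_map_sum (t := univ) (fun _ _ => inv_nonneg.mpr hc.le) hw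
    fun k _ => Set.mem_Ici.mpr (hp.1 k)
  rw [uniform_average_negMulLog, negMulLog_uniform_average hp] at jensen
  exact le_of_mul_le_mul_left jensen (inv_pos.mpr hc)

lemma pos_of_entropy_eq_log_card (hp : p ∈ simplex c) (h : entropy p = log c) (k : Fin c) :
    0 < p k := by
  have hc : (0 : ℝ) < c := Nat.cast_pos.mpr (pos_of_mem_simplex hp)
  have hw : ∑ _k : Fin c, (c : ℝ)⁻¹ = 1 := by simp [hc.ne']
  have hconst := (strictConcaveOn_negMulLog.map_sum_eq_iff_of_pos (t := univ)
    (fun _ _ => inv_pos.mpr hc) hw fun k _ => Set.mem_Ici.mpr (hp.1 k)).mp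
    (by rw [uniform_average_negMulLog, negMulLog_uniform_average hp, h])
  obtain ⟨i, -, hi⟩ := exists_ne_zero_of_sum_ne_zero (hp.2.symm ▸ one_ne_zero : ∑ k, p k ≠ 0)
  exact hconst (mem_univ i) (mem_univ k) ▸ (hp.1 i).lt_of_ne' hi

end Entropy

/-- The law of the output `Y` when the input `M ∼ α` selects the score `P M`. -/
noncomputable def mixture {m c : ℕ} (α : Fin m → ℝ) (P : Fin m → Fin c → ℝ) : Fin c → ℝ :=
  fun k => ∑ j, α j * P j k

section Mixture

variable {m c : ℕ} {α : Fin m → ℝ} {P : Fin m → Fin c → ℝ}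

lemma mixture_mem_simplex (hα : α ∈ simplex m) (hP : ∀ j, P j ∈ simplex c) :
    mixture α P ∈ simplex c := by
  refine ⟨fun k => sum_nonneg fun j _ => mul_nonneg (hα.1 j) ((hP j).1 k), ?_⟩
  simp only [mixture]
  rw [sum_comm]
  simp only [← mul_sum, (hP _).2, mul_one, hα.2]

lemma mixture_ne_zero (hα : ∀ j, 0 ≤ α j) (hP : ∀ j k, 0 ≤ P j k) {j : Fin m} {k : Fin c}
    (hj : α j ≠ 0) (hk : P j k ≠ 0) : mixture α P k ≠ 0 :=
  ((mul_pos ((hα j).lt_of_ne' hj) ((hP j k).lt_of_ne' hk)).trans_le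
    (single_le_sum (f := fun i => α i * P i k) (fun i _ => mul_nonneg (hα i) (hP i k))
      (mem_univ j))).ne'

lemma exists_pos_of_mixture_ne_zero (hα : ∀ j, 0 ≤ α j) (hP : ∀ j k, 0 ≤ P j k) {k : Fin c}
    (hk : mixture α P k ≠ 0) : ∃ j, 0 < α j ∧ 0 < P j k := by
  obtain ⟨j, -, hj⟩ := exists_ne_zero_of_sum_ne_zero hk
  exact ⟨j, (hα j).lt_of_ne' (left_ne_zero_of_mul hj),
    (hP j k).lt_of_ne' (right_ne_zero_of_mul hj)⟩

end Mixture

section KL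

variable {c : ℕ}

lemma klDiv_eq_of_support_subset {p q : Fin c → ℝ} (h : ∀ k, p k ≠ 0 → q k ≠ 0) :
    klDiv p q = (((-entropy p - ∑ k, p k * log (q k)) / log 2 : ℝ) : EReal) := by
  have hterm : ∀ k, p k * logb 2 (p k / q k) = (-negMulLog (p k) - p k * log (q k)) / log 2 := by
    intro k
    by_cases hp : p k = 0
    · simp [hp]
    · rw [logb, log_div hp (h k hp), negMulLog]
      ring
  simp only [klDiv, entropy, ← sum_neg_distrib, ← sum_sub_distrib, sum_div, ← hterm,
    EReal.coe_finset_sum]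
  refine sum_congr rfl fun k _ => ?_
  by_cases hp : p k = 0
  · simp [hp]
  · simp [hp, h k hp]

/-- `I(M;Y) = H(Y) - H(Y|M)`, in bits, when `Y` has law `mixture α P`. -/
lemma sum_mul_klDiv_mixture {m : ℕ} {α : Fin m → ℝ} {P : Fin m → Fin c → ℝ}
    (hα : ∀ j, 0 ≤ α j) (hP : ∀ j k, 0 ≤ P j k) :
    ∑ j, ((α j : ℝ) : EReal) * klDiv (P j) (mixture α P) =
      (((entropy (mixture α P) - ∑ j, α j * entropy (P j)) / log 2 : ℝ) : EReal) := by
  have hterm : ∀ j, ((α j : ℝ) : EReal) * klDiv (P j) (mixture α P) =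
      ((α j * ((-entropy (P j) - ∑ k, P j k * log (mixture α P k)) / log 2) : ℝ) : EReal) := by
    intro j
    by_cases hj : α j = 0
    · simp [hj]
    · rw [klDiv_eq_of_support_subset fun k => mixture_ne_zero hα hP hj, EReal.coe_mul]
  have hcross : entropy (mixture α P) = -∑ j, α j * ∑ k, P j k * log (mixture α P k) := by
    simp only [entropy, negMulLog, mixture, mul_sum, sum_mul, ← sum_neg_distrib]
    rw [sum_comm]
    simp only [neg_mul, mul_assoc]
  simp only [hterm, ← EReal.coe_finset_sum, hcross]
  congr 1
  simp only [mul_div_assoc', ← sum_div, mul_sub, sum_sub_distrib, mul_neg, sum_neg_distrib]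
  ring

end KL

theorem rashomon_capacity_max_converse_general (m c : ℕ)
    (P : Fin m → Fin c → ℝ) (hP : ∀ j, P j ∈ simplex c)
    (α : Fin m → ℝ) (hα : α ∈ simplex m)
    (hach : (⨅ q : simplex c, ∑ j, ((α j : ℝ) : EReal) * klDiv (P j) q.1) = capacity P)
    (hcap : capacity P = ((Real.logb 2 c : ℝ) : EReal)) :
    (∀ k : Fin c, ∃ j : Fin m, 0 < α j ∧ P j = fun i => if i = k then (1 : ℝ) else 0) ∧
    (∀ j : Fin m, 0 < α j → ∃ k : Fin c, P j = fun i => if i = k then (1 : ℝ) else 0) := by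
  have hP0 : ∀ j k, 0 ≤ P j k := fun j => (hP j).1
  have hq : mixture α P ∈ simplex c := mixture_mem_simplex hα hP
  have hinfo : log c ≤ entropy (mixture α P) - ∑ j, α j * entropy (P j) := by
    have h : ((logb 2 c : ℝ) : EReal) ≤ ∑ j, (α j : EReal) * klDiv (P j) (mixture α P) := by
      rw [← hcap, ← hach]
      exact iInf_le (fun q : simplex c => ∑ j, (α j : EReal) * klDiv (P j) q.1) ⟨_, hq⟩
    rwa [sum_mul_klDiv_mixture hα.1 hP0, EReal.coe_le_coe_iff, logb,
      div_le_div_iff_of_pos_right (log_pos one_lt_two)] at h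
  have hcond_nonneg : ∀ j ∈ univ, 0 ≤ α j * entropy (P j) :=
    fun j _ => mul_nonneg (hα.1 j) (entropy_nonneg (hP j))
  have hcond : ∑ j, α j * entropy (P j) = 0 := by
    linarith [entropy_le_log_card hq, sum_nonneg hcond_nonneg]
  have hHq : entropy (mixture α P) = log c := by linarith [entropy_le_log_card hq]
  have hpure : ∀ j, 0 < α j → ∃ k, P j = fun i => if i = k then (1 : ℝ) else 0 := by
    intro j hj
    have hzero := (sum_eq_zero_iff_of_nonneg hcond_nonneg).mp hcond j (mem_univ j)
    exact exists_eq_ite_of_entropy_eq_zero (hP j) ((mul_eq_zero.mp hzero).resolve_left hj.ne')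
  refine ⟨fun k => ?_, hpure⟩
  obtain ⟨j, hj, hjk⟩ := exists_pos_of_mixture_ne_zero hα.1 hP0
    (pos_of_entropy_eq_log_card hq hHq k).ne'
  obtain ⟨k', hk'⟩ := hpure j hj
  obtain rfl : k = k' := by
    by_contra hne
    simp [hk', hne] at hjk
  exact ⟨j, hj, hk'⟩

/-- if the Rashomon Capacity of `{P_1,…,P_m}` equals its maximum
`log₂ c` and `α` is a capacity-achieving input distribution, then every vertex
`e_k` of the simplex appears among the distributions with positive weight, and
every `P j` with positive weight is a point mass. -/
theorem rashomon_capacity_max_converse (m c : ℕ) (hc : 0 < c)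
    (P : Fin m → Fin c → ℝ) (hP : ∀ j, P j ∈ simplex c)
    (α : Fin m → ℝ) (hα : α ∈ simplex m)
    (hach : (⨅ q : simplex c, ∑ j, ((α j : ℝ) : EReal) * klDiv (P j) q.1) = capacity P)
    (hcap : capacity P = ((Real.logb 2 c : ℝ) : EReal)) :
    (∀ k : Fin c, ∃ j : Fin m, 0 < α j ∧ P j = fun i => if i = k then (1 : ℝ) else 0) ∧
    (∀ j : Fin m, 0 < α j → ∃ k : Fin c, P j = fun i => if i = k then (1 : ℝ) else 0) :=
  rashomon_capacity_max_converse_general m c P hP α hα hach hcap
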